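/- Let A be an evolution algebra over a field K with natural basis B = (e_i)_{i∈Λ}, and let U = ⋃_σ L_σ, the union taken over all bijections σ of Λ. Then U is a subgroup of the group of K-algebra automorphisms of A, and Diag(A;B) is a normal subgroup of U. -/

import Mathlib

/-- For a bijection `σ` of `Λ`, `Lset e σ` is the set of `K`-algebra automorphisms `f`
of `A` (realized as `K`-linear automorphisms preserving the multiplication) such that
`f (e i) = x i • e (σ i)` with `x i ∈ Kˣ` for every `i`.  For `σ = 1` this is
`Diag(A;B)`. -/
def Lset {K A Λ : Type*} [Field K] [NonUnitalNonAssocCommRing A] [Module K A]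
    [SMulCommClass K A A] [IsScalarTower K A A] (e : Module.Basis Λ K A) (σ : Equiv.Perm Λ) :
    Set (A ≃ₗ[K] A) :=
  {f | (∀ x y : A, f (x * y) = f x * f y) ∧ ∀ i, ∃ x : Kˣ, f (e i) = (x : K) • e (σ i)}

lemma Lset.one_mem {K A Λ : Type*} [Field K] [NonUnitalNonAssocCommRing A] [Module K A]
    [SMulCommClass K A A] [IsScalarTower K A A] (e : Module.Basis Λ K A) :
    (1 : A ≃ₗ[K] A) ∈ Lset e 1 := by
  refine ⟨fun x y => rfl, fun i => ⟨1, by simp⟩⟩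

lemma Lset.mul_mem {K A Λ : Type*} [Field K] [NonUnitalNonAssocCommRing A] [Module K A]
    [SMulCommClass K A A] [IsScalarTower K A A] (e : Module.Basis Λ K A) {σ τ : Equiv.Perm Λ}
    {f g : A ≃ₗ[K] A} (hf : f ∈ Lset e σ) (hg : g ∈ Lset e τ) :
    f * g ∈ Lset e (σ * τ) := by
  obtain ⟨hf1, hf2⟩ := hf
  obtain ⟨hg1, hg2⟩ := hg
  constructor
  · intro x y
    show f (g (x * y)) = f (g x) * f (g y)
    rw [hg1, hf1]
  · intro i
    obtain ⟨x, hx⟩ := hg2 i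
    obtain ⟨y, hy⟩ := hf2 (τ i)
    exact ⟨y * x, by
      show f (g (e i)) = ((y * x : Kˣ) : K) • e (σ (τ i))
      rw [hx, map_smul, hy, smul_smul, Units.val_mul, mul_comm]⟩

lemma Lset.inv_mem {K A Λ : Type*} [Field K] [NonUnitalNonAssocCommRing A] [Module K A]
    [SMulCommClass K A A] [IsScalarTower K A A] (e : Module.Basis Λ K A) {σ : Equiv.Perm Λ}
    {f : A ≃ₗ[K] A} (hf : f ∈ Lset e σ) : f⁻¹ ∈ Lset e σ⁻¹ := by
  obtain ⟨hf1, hf2⟩ := hf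
  constructor
  · intro x y
    apply f.injective
    show f (f.symm (x * y)) = f (f.symm x * f.symm y)
    rw [hf1]
    simp
  · intro i
    obtain ⟨x, hx⟩ := hf2 (σ⁻¹ i)
    refine ⟨x⁻¹, ?_⟩
    have : f (e (σ⁻¹ i)) = (x : K) • e i := by
      simpa using hx
    show f⁻¹ (e i) = ((x⁻¹ : Kˣ) : K) • e (σ⁻¹ i)
    apply f.injective
    rw [map_smul]
    show f (f.symm (e i)) = _
    rw [f.apply_symm_apply, this, smul_smul]
    simp

/-- Let `A` be an evolution algebra over `K` with natural basis `B = (e_i)_{i∈Λ}` and let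
`U = ⋃_σ L_σ`, the union over all bijections `σ` of `Λ`.  Then `U` is a subgroup of the
group of `K`-algebra automorphisms of `A`, and `Diag(A;B) = L_1` is a normal subgroup
of `U`. -/
theorem stmt11 {K A Λ : Type*} [Field K] [NonUnitalNonAssocCommRing A] [Module K A]
    [SMulCommClass K A A] [IsScalarTower K A A]
    (e : Module.Basis Λ K A) (hnat : ∀ i j, i ≠ j → e i * e j = 0) :
    ∃ U : Subgroup (A ≃ₗ[K] A),
      ((U : Set (A ≃ₗ[K] A)) = ⋃ σ : Equiv.Perm Λ, Lset e σ) ∧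
      ∃ D : Subgroup (A ≃ₗ[K] A),
        ((D : Set (A ≃ₗ[K] A)) = Lset e (1 : Equiv.Perm Λ)) ∧ D ≤ U ∧
        ∀ f ∈ U, ∀ d ∈ D, f * d * f⁻¹ ∈ D := by
  refine ⟨{ carrier := ⋃ σ : Equiv.Perm Λ, Lset e σ
            one_mem' := Set.mem_iUnion.2 ⟨1, Lset.one_mem e⟩
            mul_mem' := ?_
            inv_mem' := ?_ }, rfl,
          { carrier := Lset e 1
            one_mem' := Lset.one_mem e
            mul_mem' := fun ha hb => by simpa using Lset.mul_mem e ha hb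
            inv_mem' := fun ha => by simpa using Lset.inv_mem e ha }, rfl,
          ?_, ?_⟩
  · rintro f g hf hg
    obtain ⟨σ, hσ⟩ := Set.mem_iUnion.1 hf
    obtain ⟨τ, hτ⟩ := Set.mem_iUnion.1 hg
    exact Set.mem_iUnion.2 ⟨σ * τ, Lset.mul_mem e hσ hτ⟩
  · rintro f hf
    obtain ⟨σ, hσ⟩ := Set.mem_iUnion.1 hf
    exact Set.mem_iUnion.2 ⟨σ⁻¹, Lset.inv_mem e hσ⟩
  · intro f hf
    exact Set.mem_iUnion.2 ⟨1, hf⟩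
  · intro f hf d hd
    obtain ⟨σ, hσ⟩ := Set.mem_iUnion.1 hf
    have := Lset.mul_mem e (Lset.mul_mem e hσ hd) (Lset.inv_mem e hσ)
    simpa using this
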